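/- The k-tortoise complexity of the regular paperfolding word satisfies: ρ^{t(3)}_f(n) = 4n for all n ≥ 14, ρ^{t(4)}_f(n) = 4n for all n ≥ 25, and ρ^{t(5)}_f(n) = 4n for all n ≥ 26. -/

import Mathlib

/-- The tortoise operation on binary words: if the word contains a 1 (`true`),
delete the first occurrence of 1 and append a 1 at the right end; otherwise do nothing. -/
def tortoise (w : List Bool) : List Bool :=
  if true ∈ w then (w.erase true) ++ [true] else w

/-- `w` is a factor (subword) of the infinite word `x`. -/
def IsFactor (x : ℕ → Bool) (w : List Bool) : Prop :=
  ∃ i, w = (List.range w.length).map (fun t => x (i + t))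

/-- The set of length-`n` factors of `x`. -/
def factorSet (x : ℕ → Bool) (n : ℕ) : Set (List Bool) :=
  {w | w.length = n ∧ IsFactor x w}

/-- The factor complexity of `x`. -/
noncomputable def rho (x : ℕ → Bool) (n : ℕ) : ℕ :=
  (factorSet x n).ncard

/-- The tortoise complexity of `x`: the number of `∼ₜ`-equivalence classes of
length-`n` factors of `x`, i.e. the number of distinct images under `tortoise`. -/
noncomputable def rhoTort (x : ℕ → Bool) (n : ℕ) : ℕ :=
  (tortoise '' factorSet x n).ncard

/-- The `k`-tortoise complexity of `x`: the number of equivalence classes of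
length-`n` factors of `x` under `tortoise^[k] w = tortoise^[k] v`. -/
noncomputable def rhoTortK (k : ℕ) (x : ℕ → Bool) (n : ℕ) : ℕ :=
  ((tortoise^[k]) '' factorSet x n).ncard

/-- `y` is a left special factor of `x`: both `0y` and `1y` are factors of `x`. -/
def LeftSpecial (x : ℕ → Bool) (y : List Bool) : Prop :=
  IsFactor x (false :: y) ∧ IsFactor x (true :: y)

/-- The Thue–Morse sequence: `tm n` is the parity of the number of 1's in the
binary expansion of `n` (`true` = 1). -/
def tm (n : ℕ) : Bool :=
  decide ((Nat.digits 2 n).sum % 2 = 1)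

/-- The regular paperfolding sequence, reindexed so that `pf m = f_{m+1}`:
writing `m + 1 = n' * 2^k` with `n'` odd, `pf m = true` iff `n' ≡ 3 (mod 4)`. -/
def pf (m : ℕ) : Bool :=
  decide ((m + 1) / 2 ^ (padicValNat 2 (m + 1)) % 4 = 3)

/-!
Every window of four letters of the paperfolding word contains a 1, so for `n ≥ 4k` the `k`-fold
tortoise map only deletes ones among the first `4k` letters of a factor of length `n` and then
appends `k` ones. Hence, once it is injective on the factors of some length `n₀ ≥ 4k`, it is
injective on the factors of every length `n ≥ n₀`, and then `ρ^{t(k)}(n) = ρ(n) = 4n`.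

The factor complexity `ρ(n) = 4n` (`n ≥ 8`) follows from `ρ(n) = ρ(⌊n/2⌋) + ρ(⌈n/2⌉)`, which
holds because all occurrences of a factor of length at least 8 have the same parity. Injectivity
at `n₀ = 14, 25, 26` is a finite computation: a factor of length at most `2^a` already occurs at
some position below `2^(a+3)`.
-/
open Set Function

theorem ncard_range_eq_of_eq_iff {ι α β : Type*} {f : ι → α} {g : ι → β}
    (h : ∀ i j, f i = f j ↔ g i = g j) : (range f).ncard = (range g).ncard :=
  Nat.card_congr ((Setoid.quotientKerEquivRange f).symm.trans
    ((Quotient.congrRight h).trans (Setoid.quotientKerEquivRange g)))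

theorem range_eq_range_two_mul_union {α : Type*} (f : ℕ → α) :
    range f = range (fun j => f (2 * j)) ∪ range (fun j => f (2 * j + 1)) := by
  ext w
  simp only [mem_union, mem_range]
  constructor
  · rintro ⟨i, rfl⟩
    obtain ⟨j, rfl | rfl⟩ := Nat.even_or_odd' i
    exacts [Or.inl ⟨j, rfl⟩, Or.inr ⟨j, rfl⟩]
  · rintro (⟨j, rfl⟩ | ⟨j, rfl⟩) <;> exact ⟨_, rfl⟩

section Words

variable (x : ℕ → Bool)

def factorAt (i n : ℕ) : List Bool := (List.range n).map fun t => x (i + t)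

variable {x}

@[simp]
theorem length_factorAt (i n : ℕ) : (factorAt x i n).length = n := by simp [factorAt]

theorem factorAt_add (i a b : ℕ) :
    factorAt x i (a + b) = factorAt x i a ++ factorAt x (i + a) b := by
  simp only [factorAt, List.range_add, List.map_append, List.map_map]
  congr 1
  exact List.map_congr_left fun t _ => by simp only [comp_apply, Nat.add_assoc]

theorem getD_factorAt {i n t : ℕ} (ht : t < n) : (factorAt x i n).getD t false = x (i + t) := by
  simp [factorAt, ht]

theorem factorAt_eq_factorAt_iff {i j n : ℕ} :
    factorAt x i n = factorAt x j n ↔ ∀ t < n, x (i + t) = x (j + t) := by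
  refine ⟨fun h t ht => ?_, fun h => List.map_congr_left fun t ht => h t (List.mem_range.mp ht)⟩
  simpa only [getD_factorAt ht] using congrArg (·.getD t false) h

theorem take_factorAt {i m n : ℕ} (h : m ≤ n) : (factorAt x i n).take m = factorAt x i m := by
  rw [factorAt, ← List.map_take, List.take_range, min_eq_left h, factorAt]

theorem factorSet_eq_range (n : ℕ) : factorSet x n = range (factorAt x · n) := by
  ext w
  constructor
  · rintro ⟨rfl, i, hw⟩
    exact ⟨i, hw.symm⟩
  · rintro ⟨i, rfl⟩
    exact ⟨length_factorAt i n, i, by rw [length_factorAt]; rfl⟩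

theorem take_mem_factorSet {w : List Bool} {m n : ℕ} (hw : w ∈ factorSet x n) (h : m ≤ n) :
    w.take m ∈ factorSet x m := by
  rw [factorSet_eq_range] at hw ⊢
  obtain ⟨i, rfl⟩ := hw
  exact ⟨i, (take_factorAt h).symm⟩

theorem le_count_factorAt {g : ℕ} (hgap : ∀ i, ∃ t < g, x (i + t) = true) (i k : ℕ) :
    k ≤ (factorAt x i (g * k)).count true := by
  induction k generalizing i with
  | zero => exact Nat.zero_le _
  | succ k ih =>
    obtain ⟨t, ht, hxt⟩ := hgap i
    have hpos : 0 < (factorAt x i g).count true := by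
      rw [List.count_pos_iff, ← hxt]
      exact List.mem_map.mpr ⟨t, List.mem_range.mpr ht, rfl⟩
    rw [show g * (k + 1) = g + g * k by ring, factorAt_add, List.count_append]
    have := ih (i + g)
    omega

end Words

theorem iterate_tortoise_append {k : ℕ} {u : List Bool} (v : List Bool) (hu : k ≤ u.count true) :
    tortoise^[k] (u ++ v) = (List.erase · true)^[k] u ++ v ++ List.replicate k true := by
  induction k generalizing u v with
  | zero => simp
  | succ k ih =>
    have hmem : true ∈ u := List.count_pos_iff.mp (by omega)
    have hstep : tortoise (u ++ v) = u.erase true ++ (v ++ [true]) := by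
      rw [tortoise, if_pos (List.mem_append_left v hmem), List.erase_append_left v hmem,
        List.append_assoc]
    rw [iterate_succ_apply, iterate_succ_apply, hstep,
      ih _ (by rw [List.count_erase_self]; omega)]
    simp [List.replicate_succ]

/-- The ones moved to the end by `tortoise^[k]` all come from the first `m` letters. -/
theorem eq_of_iterate_tortoise_eq {k m n₀ : ℕ} {w w' : List Bool} (hmn : m ≤ n₀)
    (hlen : w.length = w'.length) (hw : k ≤ (w.take m).count true)
    (hw' : k ≤ (w'.take m).count true)
    (hpre : tortoise^[k] (w.take n₀) = tortoise^[k] (w'.take n₀) → w.take n₀ = w'.take n₀)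
    (h : tortoise^[k] w = tortoise^[k] w') : w = w' := by
  have hsplit : ∀ u : List Bool, u.take n₀ = u.take m ++ (u.drop m).take (n₀ - m) := fun u => by
    rw [← List.take_add, Nat.add_sub_cancel' hmn]
  rw [← List.take_append_drop m w, ← List.take_append_drop m w', iterate_tortoise_append _ hw,
    iterate_tortoise_append _ hw'] at h
  obtain ⟨hE, hdrop⟩ := List.append_inj' (List.append_cancel_right h) (by simp [hlen])
  have htake : w.take n₀ = w'.take n₀ := hpre <| by
    rw [hsplit, hsplit, iterate_tortoise_append _ hw, iterate_tortoise_append _ hw', hE, hdrop]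
  rw [← List.take_append_drop n₀ w, ← List.take_append_drop n₀ w', htake,
    ← Nat.add_sub_cancel' hmn, ← List.drop_drop, ← List.drop_drop, hdrop]

theorem injOn_iterate_tortoise_factorSet_of_le {x : ℕ → Bool} {g k n₀ n : ℕ}
    (hgap : ∀ i, ∃ t < g, x (i + t) = true) (hk : g * k ≤ n₀) (hn : n₀ ≤ n)
    (h : InjOn (tortoise^[k]) (factorSet x n₀)) : InjOn (tortoise^[k]) (factorSet x n) := by
  have hcount : ∀ w ∈ factorSet x n, k ≤ (w.take (g * k)).count true := fun w hw => by
    obtain ⟨i, hi⟩ := (factorSet_eq_range _ ▸ take_mem_factorSet hw (hk.trans hn) :)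
    exact hi ▸ le_count_factorAt hgap i k
  intro w hw w' hw' hT
  exact eq_of_iterate_tortoise_eq hk (hw.1.trans hw'.1.symm) (hcount w hw) (hcount w' hw')
    (h (take_mem_factorSet hw hn) (take_mem_factorSet hw' hn)) hT

theorem pf_two_mul (j : ℕ) : pf (2 * j) = decide (j % 2 = 1) := by
  have hodd : ¬ 2 ∣ 2 * j + 1 := by omega
  simp only [pf, padicValNat.eq_zero_of_not_dvd hodd, pow_zero, Nat.div_one]
  exact decide_eq_decide.mpr (by omega)

theorem pf_two_mul_add_one (j : ℕ) : pf (2 * j + 1) = pf j := by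
  have h : 2 * j + 1 + 1 = 2 * (j + 1) := by ring
  simp only [pf, h, padicValNat.mul (p := 2) two_ne_zero (Nat.succ_ne_zero j),
    padicValNat.self one_lt_two, pow_add, pow_one, Nat.mul_div_mul_left _ _ two_pos]

theorem pf_two_mul_add_two (j : ℕ) : pf (2 * j + 2) = !pf (2 * j) := by
  rw [show 2 * j + 2 = 2 * (j + 1) by ring, pf_two_mul, pf_two_mul]
  rcases Nat.mod_two_eq_zero_or_one j with h | h <;> simp [h, Nat.add_mod]

theorem exists_lt_four_pf_eq_true (i : ℕ) : ∃ t < 4, pf (i + t) = true := by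
  obtain ⟨j, rfl | rfl⟩ := Nat.even_or_odd' i
  · cases h : pf (2 * j)
    · exact ⟨2, by norm_num, by rw [pf_two_mul_add_two, h]; rfl⟩
    · exact ⟨0, by norm_num, h⟩
  · cases h : pf (2 * j + 2)
    · refine ⟨3, by norm_num, ?_⟩
      rw [show 2 * j + 1 + 3 = 2 * (j + 1) + 2 by ring, pf_two_mul_add_two,
        show 2 * (j + 1) = 2 * j + 2 by ring, h]
      rfl
    · exact ⟨1, by norm_num, h⟩

theorem pf_two_pow_mul_sub_one (s : ℕ) {c : ℕ} (hc : 0 < c) :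
    pf (2 ^ s * c - 1) = pf (c - 1) := by
  induction s with
  | zero => simp
  | succ s ih =>
    have hpos : 0 < 2 ^ s * c := by positivity
    have h : 2 ^ (s + 1) * c - 1 = 2 * (2 ^ s * c - 1) + 1 := by
      rw [pow_succ, mul_comm _ 2, mul_assoc]
      omega
    rw [h, pf_two_mul_add_one, ih]

theorem pf_eq_of_modEq {a m m' : ℕ} (hm : ¬ 2 ^ a ∣ m + 1) (h : m ≡ m' [MOD 2 ^ (a + 1)]) :
    pf m = pf m' := by
  induction a generalizing m m' with
  | zero => simp at hm
  | succ a ih =>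
    have hpow : 2 ^ (a + 2) = 2 * 2 ^ (a + 1) := by ring
    have h4 : m % 4 = m' % 4 := h.of_dvd (pow_dvd_pow 2 (by omega : 2 ≤ a + 2))
    obtain ⟨j, rfl | rfl⟩ := Nat.even_or_odd' m <;> obtain ⟨j', rfl | rfl⟩ := Nat.even_or_odd' m'
    · rw [pf_two_mul, pf_two_mul]
      exact decide_eq_decide.mpr (by omega)
    · omega
    · omega
    · rw [pf_two_mul_add_one, pf_two_mul_add_one]
      refine ih (fun hd => hm ?_) ?_
      · rw [pow_succ', show 2 * j + 1 + 1 = 2 * (j + 1) by ring]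
        exact Nat.mul_dvd_mul_left 2 hd
      · rw [hpow] at h
        exact Nat.ModEq.mul_left_cancel' two_ne_zero (Nat.ModEq.add_right_cancel' 1 h)

theorem exists_lt_four_pf_two_pow_mul_sub_one_eq (a : ℕ) {u : ℕ} (hu : u = 1 ∨ u = 2) (b : Bool) :
    ∃ e < 4, pf (2 ^ a * (u + 2 * e) - 1) = b := by
  suffices ∃ e < 4, pf (u + 2 * e - 1) = b by
    obtain ⟨e, he, hb⟩ := this
    exact ⟨e, he, by rw [pf_two_pow_mul_sub_one a (by omega), hb]⟩
  rcases hu with rfl | rfl <;> cases b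
  · exact ⟨0, by norm_num, pf_two_mul 0⟩
  · exact ⟨1, by norm_num, pf_two_mul 1⟩
  · exact ⟨0, by norm_num, (pf_two_mul_add_one 0).trans (pf_two_mul 0)⟩
  · exact ⟨2, by norm_num, (pf_two_mul_add_one 2).trans (pf_two_mul 1)⟩

/-- Off the at most one position `i + t` of the window with `2 ^ a ∣ i + t + 1`, `pf` is
`2 ^ (a + 1)`-periodic; a shift by a suitable multiple of `2 ^ (a + 1)` also fixes that letter. -/
theorem exists_lt_factorAt_pf_eq (a : ℕ) {n : ℕ} (hn : n ≤ 2 ^ a) (i : ℕ) :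
    ∃ i' < 2 ^ (a + 3), factorAt pf i' n = factorAt pf i n := by
  set M := 2 ^ (a + 1)
  set r := i % M
  have hM : M = 2 * 2 ^ a := pow_succ' 2 a
  have hr : r < M := Nat.mod_lt _ (by positivity)
  have hrM : r ≡ i [MOD M] := Nat.mod_modEq i M
  have hshift : ∀ e t, ¬ 2 ^ a ∣ i + t + 1 → pf (r + M * e + t) = pf (i + t) := fun e t ht => by
    have he : r + M * e ≡ i [MOD M] := by rw [Nat.ModEq, Nat.add_mul_mod_self_left]; exact hrM
    exact (pf_eq_of_modEq ht (he.add_right t).symm).symm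
  by_cases hhole : ∃ t₀ < n, 2 ^ a ∣ i + t₀ + 1
  · obtain ⟨t₀, ht₀, hd₀⟩ := hhole
    have honly : ∀ t < n, 2 ^ a ∣ i + t + 1 → t = t₀ := fun t ht hd => by
      have h : i + t + 1 ≡ i + t₀ + 1 [MOD 2 ^ a] :=
        (Nat.modEq_zero_iff_dvd.mpr hd).trans (Nat.modEq_zero_iff_dvd.mpr hd₀).symm
      have h' : t % 2 ^ a = t₀ % 2 ^ a := (h.add_right_cancel' 1).add_left_cancel' i
      rwa [Nat.mod_eq_of_lt (by omega), Nat.mod_eq_of_lt (by omega)] at h'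
    obtain ⟨u, hu⟩ : 2 ^ a ∣ r + t₀ + 1 :=
      (Nat.modEq_zero_iff_dvd.mp (((hrM.of_dvd ⟨2, by rw [hM]; ring⟩).add_right (t₀ + 1)).trans
        (Nat.modEq_zero_iff_dvd.mpr hd₀)))
    have hu3 : u < 3 := Nat.lt_of_mul_lt_mul_left (a := 2 ^ a) (by omega)
    obtain ⟨e, he, hpf⟩ := exists_lt_four_pf_two_pow_mul_sub_one_eq a (u := u) (by
      rcases Nat.eq_zero_or_pos u with rfl | _ <;> omega) (pf (i + t₀))
    have hMe : M * e = 2 ^ a * (2 * e) := by rw [hM]; ring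
    have hlt : r + M * e < 2 ^ (a + 3) := by
      have : 2 ^ (a + 3) = 2 ^ a * 8 := by ring
      have : 2 ^ a * (2 * e) ≤ 2 ^ a * 6 := Nat.mul_le_mul_left _ (by omega)
      omega
    refine ⟨r + M * e, hlt, factorAt_eq_factorAt_iff.mpr fun t ht => ?_⟩
    by_cases htt : t = t₀
    · have hdistrib : 2 ^ a * (u + 2 * e) = 2 ^ a * u + 2 ^ a * (2 * e) := mul_add _ _ _
      rw [htt, ← hpf, show r + M * e + t₀ = 2 ^ a * (u + 2 * e) - 1 by omega]
    · exact hshift e t fun hd => htt (honly t ht hd)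
  · push Not at hhole
    exact ⟨r, hr.trans_le (Nat.pow_le_pow_right two_pos (by omega)),
      factorAt_eq_factorAt_iff.mpr fun t ht => by simpa using hshift 0 t (hhole t ht)⟩

/-- A kernel-reducible version of `pf` (whose definition goes through `padicValNat`), following
`pf (2 * j) = (j odd)` and `pf (2 * j + 1) = pf j`; the first argument is recursion fuel. -/
def pfFuel : ℕ → ℕ → Bool
  | 0, _ => false
  | f + 1, m => if m % 2 = 0 then decide (m / 2 % 2 = 1) else pfFuel f (m / 2)

theorem pfFuel_eq_pf {f m : ℕ} (h : m < f) : pfFuel f m = pf m := by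
  induction f generalizing m with
  | zero => omega
  | succ f ih =>
    obtain ⟨j, rfl | rfl⟩ := Nat.even_or_odd' m
    · simp [pfFuel, pf_two_mul]
    · rw [pfFuel, if_neg (by omega), show (2 * j + 1) / 2 = j by omega, ih (by omega),
        pf_two_mul_add_one]

def pfComputable (m : ℕ) : Bool := pfFuel (m + 1) m

theorem pfComputable_eq_pf : pfComputable = pf := funext fun _ => pfFuel_eq_pf (Nat.lt_succ_self _)

def pfFactors (a n : ℕ) : Finset (List Bool) :=
  (Finset.range (2 ^ (a + 3))).image (factorAt pfComputable · n)

theorem factorSet_pf_eq_pfFactors {a n : ℕ} (hn : n ≤ 2 ^ a) : factorSet pf n = pfFactors a n := by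
  ext w
  simp only [factorSet_eq_range, pfFactors, pfComputable_eq_pf, Finset.coe_image, Finset.coe_range,
    mem_range, mem_image, mem_Iio]
  constructor
  · rintro ⟨i, rfl⟩
    exact exists_lt_factorAt_pf_eq a hn i
  · rintro ⟨i, -, rfl⟩
    exact ⟨i, rfl⟩

theorem factorSet_pf_finite (n : ℕ) : (factorSet pf n).Finite := by
  rw [factorSet_pf_eq_pfFactors n.lt_two_pow_self.le]
  exact Finset.finite_toSet _

theorem rho_pf_eq_card_pfFactors {a n : ℕ} (hn : n ≤ 2 ^ a) : rho pf n = (pfFactors a n).card := by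
  rw [rho, factorSet_pf_eq_pfFactors hn, ncard_coe_finset]

theorem pfComputable_not_antiperiodic :
    ∀ i < 2 ^ 6, ¬ ∀ t < 6, pfComputable (i + t + 2) = !pfComputable (i + t) := by
  decide +kernel

theorem not_forall_pf_add_two_eq_not (x : ℕ) : ¬ ∀ t < 6, pf (x + t + 2) = !pf (x + t) := by
  obtain ⟨x', hx', hfac⟩ := exists_lt_factorAt_pf_eq 3 (n := 8) (by norm_num) x
  have hx := factorAt_eq_factorAt_iff.mp hfac
  have hcheck := pfComputable_not_antiperiodic
  rw [pfComputable_eq_pf] at hcheck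
  intro h
  refine hcheck x' hx' fun t ht => ?_
  rw [add_assoc x', hx _ (by omega), hx t (by omega), ← add_assoc, h t ht]

/-- At even positions `pf` alternates with period 2, so a factor occurring at positions of both
parities would alternate everywhere, which no factor of length 8 does. -/
theorem mod_two_eq_of_factorAt_pf_eq {m x y : ℕ} (hm : 8 ≤ m)
    (h : factorAt pf x m = factorAt pf y m) : x % 2 = y % 2 := by
  have hmixed : ∀ x y, x % 2 = 0 → y % 2 = 1 → factorAt pf x m = factorAt pf y m → False := by
    intro x y hx hy h
    have hxy := factorAt_eq_factorAt_iff.mp h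
    refine not_forall_pf_add_two_eq_not x fun t ht => ?_
    rcases Nat.even_or_odd' (x + t) with ⟨j, hj | hj⟩
    · rw [hj, pf_two_mul_add_two]
    · obtain ⟨j', hj'⟩ : ∃ j', y + t = 2 * j' := ⟨(y + t) / 2, by omega⟩
      rw [hxy t (by omega), add_assoc, hxy (t + 2) (by omega), ← add_assoc, hj',
        pf_two_mul_add_two]
  rcases Nat.mod_two_eq_zero_or_one x with hx | hx <;>
    rcases Nat.mod_two_eq_zero_or_one y with hy | hy
  · omega
  · exact (hmixed x y hx hy h).elim
  · exact (hmixed y x hy hx h.symm).elim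
  · omega

theorem factorAt_pf_two_mul_eq_iff {m n i j : ℕ} (hm : 8 ≤ m) (h₁ : 2 * m ≤ n)
    (h₂ : n ≤ 2 * m + 1) :
    factorAt pf (2 * i) n = factorAt pf (2 * j) n ↔ factorAt pf i m = factorAt pf j m := by
  have hodd : ∀ i s, pf (2 * i + (2 * s + 1)) = pf (i + s) := fun i s => by
    rw [show 2 * i + (2 * s + 1) = 2 * (i + s) + 1 by ring, pf_two_mul_add_one]
  refine ⟨fun h => factorAt_eq_factorAt_iff.mpr fun s hs => ?_, fun h => ?_⟩
  · rw [← hodd i s, ← hodd j s]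
    exact factorAt_eq_factorAt_iff.mp h _ (by omega)
  · have hpar := mod_two_eq_of_factorAt_pf_eq hm h
    refine factorAt_eq_factorAt_iff.mpr fun t ht => ?_
    obtain ⟨s, rfl | rfl⟩ := Nat.even_or_odd' t
    · rw [← mul_add, ← mul_add, pf_two_mul, pf_two_mul]
      exact decide_eq_decide.mpr (by omega)
    · rw [hodd, hodd]
      exact factorAt_eq_factorAt_iff.mp h s (by omega)

theorem factorAt_pf_two_mul_add_one_eq_iff {m n i j : ℕ} (hm : 8 ≤ m) (h₁ : 2 * m ≤ n + 1)
    (h₂ : n ≤ 2 * m) :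
    factorAt pf (2 * i + 1) n = factorAt pf (2 * j + 1) n ↔
      factorAt pf i m = factorAt pf j m := by
  have heven : ∀ i s, pf (2 * i + 1 + 2 * s) = pf (i + s) := fun i s => by
    rw [show 2 * i + 1 + 2 * s = 2 * (i + s) + 1 by ring, pf_two_mul_add_one]
  refine ⟨fun h => factorAt_eq_factorAt_iff.mpr fun s hs => ?_, fun h => ?_⟩
  · rw [← heven i s, ← heven j s]
    exact factorAt_eq_factorAt_iff.mp h _ (by omega)
  · have hpar := mod_two_eq_of_factorAt_pf_eq hm h
    refine factorAt_eq_factorAt_iff.mpr fun t ht => ?_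
    obtain ⟨s, rfl | rfl⟩ := Nat.even_or_odd' t
    · rw [heven, heven]
      exact factorAt_eq_factorAt_iff.mp h s (by omega)
    · rw [show 2 * i + 1 + (2 * s + 1) = 2 * (i + s + 1) by ring,
        show 2 * j + 1 + (2 * s + 1) = 2 * (j + s + 1) by ring, pf_two_mul, pf_two_mul]
      exact decide_eq_decide.mpr (by omega)

theorem rho_pf_eq_add {n : ℕ} (hn : 16 ≤ n) :
    rho pf n = rho pf (n / 2) + rho pf ((n + 1) / 2) := by
  have hdisj : Disjoint (range fun j => factorAt pf (2 * j) n)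
      (range fun j => factorAt pf (2 * j + 1) n) := by
    rw [disjoint_left]
    rintro _ ⟨i, rfl⟩ ⟨j, hj⟩
    have := mod_two_eq_of_factorAt_pf_eq (by omega) hj
    omega
  have hfin : ∀ f : ℕ → ℕ, (range fun j => factorAt pf (f j) n).Finite := fun f =>
    (factorSet_pf_finite n).subset (by rintro _ ⟨j, rfl⟩; rw [factorSet_eq_range]; exact ⟨f j, rfl⟩)
  simp only [rho, factorSet_eq_range]
  rw [range_eq_range_two_mul_union, ncard_union_eq hdisj (hfin _) (hfin _),
    ncard_range_eq_of_eq_iff fun i j => factorAt_pf_two_mul_eq_iff (m := n / 2) (by omega)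
      (by omega) (by omega),
    ncard_range_eq_of_eq_iff fun i j => factorAt_pf_two_mul_add_one_eq_iff (m := (n + 1) / 2)
      (by omega) (by omega) (by omega)]

theorem card_pfFactors_four : ∀ n ∈ Finset.Icc 8 15, (pfFactors 4 n).card = 4 * n := by
  decide +kernel

theorem rho_pf {n : ℕ} (hn : 8 ≤ n) : rho pf n = 4 * n := by
  induction n using Nat.strong_induction_on with
  | _ n ih =>
    rcases lt_or_ge n 16 with hlt | hge
    · rw [rho_pf_eq_card_pfFactors (a := 4) (by omega)]
      exact card_pfFactors_four n (Finset.mem_Icc.mpr ⟨hn, by omega⟩)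
    · rw [rho_pf_eq_add hge, ih _ (by omega) (by omega), ih _ (by omega) (by omega)]
      omega

theorem rhoTortK_pf_of_card_image {a k n₀ n : ℕ} (hk : 4 * k ≤ n₀) (h₈ : 8 ≤ n₀)
    (ha : n₀ ≤ 2 ^ a)
    (hcheck : ((pfFactors a n₀).image (tortoise^[k])).card = (pfFactors a n₀).card)
    (hn : n₀ ≤ n) : rhoTortK k pf n = 4 * n := by
  have h₀ : InjOn (tortoise^[k]) (factorSet pf n₀) :=
    factorSet_pf_eq_pfFactors ha ▸ Finset.injOn_of_card_image_eq hcheck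
  rw [rhoTortK,
    (injOn_iterate_tortoise_factorSet_of_le exists_lt_four_pf_eq_true hk hn h₀).ncard_image]
  exact rho_pf (h₈.trans hn)

theorem card_image_iterate_tortoise_pfFactors_14 :
    ((pfFactors 4 14).image (tortoise^[3])).card = (pfFactors 4 14).card := by
  decide +kernel

theorem card_image_iterate_tortoise_pfFactors_25 :
    ((pfFactors 5 25).image (tortoise^[4])).card = (pfFactors 5 25).card := by
  decide +kernel

theorem card_image_iterate_tortoise_pfFactors_26 :
    ((pfFactors 5 26).image (tortoise^[5])).card = (pfFactors 5 26).card := by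
  decide +kernel

/-- the `k`-tortoise complexity of the paperfolding word satisfies
`ρ^{t(3)}_f(n) = 4n` for `n ≥ 14`, `ρ^{t(4)}_f(n) = 4n` for `n ≥ 25`, and
`ρ^{t(5)}_f(n) = 4n` for `n ≥ 26`. -/
theorem stmt_7 :
    (∀ n : ℕ, 14 ≤ n → rhoTortK 3 pf n = 4 * n) ∧
    (∀ n : ℕ, 25 ≤ n → rhoTortK 4 pf n = 4 * n) ∧
    (∀ n : ℕ, 26 ≤ n → rhoTortK 5 pf n = 4 * n) :=
  ⟨fun _ => rhoTortK_pf_of_card_image (a := 4) (by norm_num) (by norm_num) (by norm_num)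
      card_image_iterate_tortoise_pfFactors_14,
    fun _ => rhoTortK_pf_of_card_image (a := 5) (by norm_num) (by norm_num) (by norm_num)
      card_image_iterate_tortoise_pfFactors_25,
    fun _ => rhoTortK_pf_of_card_image (a := 5) (by norm_num) (by norm_num) (by norm_num)
      card_image_iterate_tortoise_pfFactors_26⟩
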